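/- arXiv:2202.03174 — 7 statements merged into one kernel-verified Lean document; each statement's English description precedes it below -/
import Mathlib

section
/- Let (X,r) be a left non-degenerate set-theoretic solution of the YBE and M = M(X,r) with its two operations + and ∘. Then the relation μ (defined by the iterative construction below) is a congruence on the monoid (M,+) and the quotient monoid (M,+)/μ is left cancellative. -/
open scoped Classical

section YBEDefs

variable {X : Type*}

/-- First component `σ_x(y)` of `r (x, y)`. -/
def ybeSigma (r : X × X → X × X) (x y : X) : X := (r (x, y)).1

/-- Second component `γ_y(x)` of `r (x, y)`. -/
def ybeGamma (r : X × X → X × X) (y x : X) : X := (r (x, y)).2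

/-- `r` acting on the first two components of `X³`. -/
def yb12 (r : X × X → X × X) : X × X × X → X × X × X :=
  fun p => ((r (p.1, p.2.1)).1, ((r (p.1, p.2.1)).2, p.2.2))

/-- `r` acting on the last two components of `X³`. -/
def yb23 (r : X × X → X × X) : X × X × X → X × X × X :=
  fun p => (p.1, r p.2)

/-- `(X, r)` is a set-theoretic solution of the Yang–Baxter equation. -/
def IsYBE (r : X × X → X × X) : Prop :=
  yb12 r ∘ yb23 r ∘ yb12 r = yb23 r ∘ yb12 r ∘ yb23 r

/-- left non-degenerate: all `σ_x` are bijective. -/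
def IsLeftND (r : X × X → X × X) : Prop := ∀ x, Function.Bijective (ybeSigma r x)

/-- right non-degenerate: all `γ_y` are bijective. -/
def IsRightND (r : X × X → X × X) : Prop := ∀ y, Function.Bijective (ybeGamma r y)

/-- The defining relations `x∘y = σ_x(y) ∘ γ_y(x)` of the structure monoid. -/
def structRel (r : X × X → X × X) : FreeMonoid X → FreeMonoid X → Prop :=
  fun a b => ∃ x y : X, a = FreeMonoid.of x * FreeMonoid.of y ∧
    b = FreeMonoid.of (ybeSigma r x y) * FreeMonoid.of (ybeGamma r y x)

/-- The congruence on the free monoid generated by the defining relations. -/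
def structCon (r : X × X → X × X) : Con (FreeMonoid X) := conGen (structRel r)

/-- The (multiplicative) structure monoid `M(X, r)`. -/
abbrev SM (r : X × X → X × X) := (structCon r).Quotient

/-- The canonical image of a generator `x ∈ X` in `M(X, r)`. -/
def ofSM (r : X × X → X × X) (x : X) : SM r := (structCon r).mk' (FreeMonoid.of x)

/-- The left derived solution `r'(x,y) = (y, σ_y γ_{σ_x⁻¹(y)}(x))`. -/
noncomputable def derivedR (r : X × X → X × X) : X × X → X × X := fun p =>
  haveI : Nonempty X := ⟨p.1⟩
  (p.2, ybeSigma r p.2 (ybeGamma r (Function.invFun (ybeSigma r p.1) p.2) p.1))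

/-- The defining relations `x + y = y + σ_y γ_{σ_x⁻¹(y)}(x)` of the derived
structure monoid, written additively. -/
def derivedRel (r : X × X → X × X) : FreeAddMonoid X → FreeAddMonoid X → Prop :=
  fun a b => ∃ x y : X, a = FreeAddMonoid.of x + FreeAddMonoid.of y ∧
    b = FreeAddMonoid.of ((derivedR r (x, y)).1) + FreeAddMonoid.of ((derivedR r (x, y)).2)

/-- The additive congruence generated by the derived relations. -/
noncomputable def derivedAddCon (r : X × X → X × X) : AddCon (FreeAddMonoid X) :=
  addConGen (derivedRel r)

/-- The additive structure monoid `A(X, r) = M(X, r')`. -/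
noncomputable abbrev AM (r : X × X → X × X) := (derivedAddCon r).Quotient

/-- The canonical image of a generator `x ∈ X` in `A(X, r)`. -/
noncomputable def ofAM (r : X × X → X × X) (x : X) : AM r :=
  (derivedAddCon r).mk' (FreeAddMonoid.of x)

end YBEDefs

/-- The multiplicative automorphism group structure on `AddAut A` (composition), as in the
older Mathlib, where `AddAut A` was a `Group`. -/
instance addAutMulGroup {A : Type*} [Add A] : Group (AddAut A) where
  mul g h := AddEquiv.trans h g
  one := AddEquiv.refl _
  inv := AddEquiv.symm
  mul_assoc _ _ _ := rfl
  one_mul _ := rfl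
  mul_one _ := rfl
  inv_mul_cancel := AddEquiv.self_trans_symm

section MuDefs

variable {X : Type*}

/-- The multiplication `a ∘ b = a + λ'_a(b)` of `M(X,r)` transported to
`A(X,r)` via the identification `π`. -/
noncomputable def opA (r : X × X → X × X) (lam : SM r →* AddAut (AM r)) (pi : SM r ≃ AM r)
    (a b : AM r) : AM r :=
  a + lam (pi.symm a) b

/-- The map `λ'` indexed by elements of `A(X,r)` via the identification `π`. -/
noncomputable def lamA (r : X × X → X × X) (lam : SM r →* AddAut (AM r)) (pi : SM r ≃ AM r)
    (a : AM r) : AddAut (AM r) :=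
  lam (pi.symm a)

/-- The relations `μ₀, μ₁, μ₂, …` of the iterative construction:
`μ₀ = {(a,b) : ∃ c, c + a = c + b}`; `μ_{4m+1}` is the transitive closure of `μ_{4m}`;
`μ_{4m+2} = {((λ'_z)^ε(a∘c), (λ'_z)^ε(b∘c)) : z, c ∈ M, ε ∈ {-1,1}, (a,b) ∈ μ_{4m+1}}`;
`μ_{4m+3}` is the transitive closure of `μ_{4m+2}`;
`μ_{4m+4} = {(c+a+d, c+b+d) : (a,b) ∈ μ_{4m+3}} ∪ {(a,b) : ∃ c, (c+a, c+b) ∈ μ_{4m+3}}`. -/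
def muN (r : X × X → X × X) (lam : SM r →* AddAut (AM r)) (pi : SM r ≃ AM r) :
    ℕ → AM r → AM r → Prop
  | 0 => fun a b => ∃ c : AM r, c + a = c + b
  | n + 1 =>
    if n % 4 = 0 ∨ n % 4 = 2 then Relation.TransGen (muN r lam pi n)
    else if n % 4 = 1 then
      fun u v => ∃ (z : SM r) (c a b : AM r), muN r lam pi n a b ∧
        ((u = lam z (opA r lam pi a c) ∧ v = lam z (opA r lam pi b c)) ∨
         (u = (lam z)⁻¹ (opA r lam pi a c) ∧ v = (lam z)⁻¹ (opA r lam pi b c)))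
    else
      fun u v =>
        (∃ c d a b : AM r, muN r lam pi n a b ∧ u = c + a + d ∧ v = c + b + d) ∨
        (∃ c : AM r, muN r lam pi n (c + u) (c + v))

/-- `μ = ⋃_{n ≥ 0} μ_n`. -/
def muRel (r : X × X → X × X) (lam : SM r →* AddAut (AM r)) (pi : SM r ≃ AM r) :
    AM r → AM r → Prop :=
  fun a b => ∃ n, muN r lam pi n a b

end MuDefs


section MuLemmas

variable {X : Type*} (r : X × X → X × X) (lam : SM r →* AddAut (AM r)) (pi : SM r ≃ AM r)

lemma muN_succ_eq_transGen (n : ℕ) (h : n % 4 = 0 ∨ n % 4 = 2) :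
    muN r lam pi (n + 1) = Relation.TransGen (muN r lam pi n) := by
  simp only [muN, if_pos h]

lemma muN_succ_eq_of_one (n : ℕ) (h : n % 4 = 1) :
    muN r lam pi (n + 1) = fun u v => ∃ (z : SM r) (c a b : AM r), muN r lam pi n a b ∧
        ((u = lam z (opA r lam pi a c) ∧ v = lam z (opA r lam pi b c)) ∨
         (u = (lam z)⁻¹ (opA r lam pi a c) ∧ v = (lam z)⁻¹ (opA r lam pi b c))) := by
  have h1 : ¬ (n % 4 = 0 ∨ n % 4 = 2) := by omega
  simp only [muN, if_neg h1, if_pos h]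

lemma muN_succ_eq_of_three (n : ℕ) (h : n % 4 = 3) :
    muN r lam pi (n + 1) = fun u v =>
        (∃ c d a b : AM r, muN r lam pi n a b ∧ u = c + a + d ∧ v = c + b + d) ∨
        (∃ c : AM r, muN r lam pi n (c + u) (c + v)) := by
  have h1 : ¬ (n % 4 = 0 ∨ n % 4 = 2) := by omega
  have h2 : ¬ (n % 4 = 1) := by omega
  simp only [muN, if_neg h1, if_neg h2]

lemma muN_mono (n : ℕ) {a b : AM r} (h : muN r lam pi n a b) :
    muN r lam pi (n + 1) a b := by
  have h4 : n % 4 = 0 ∨ n % 4 = 1 ∨ n % 4 = 2 ∨ n % 4 = 3 := by omega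
  rcases h4 with h0 | h1 | h2 | h3
  · rw [muN_succ_eq_transGen r lam pi n (Or.inl h0)]
    exact Relation.TransGen.single h
  · rw [muN_succ_eq_of_one r lam pi n h1]
    refine ⟨1, 0, a, b, h, Or.inl ⟨?_, ?_⟩⟩ <;>
      simp [opA, map_zero, map_one] <;> rfl
  · rw [muN_succ_eq_transGen r lam pi n (Or.inr h2)]
    exact Relation.TransGen.single h
  · rw [muN_succ_eq_of_three r lam pi n h3]
    exact Or.inl ⟨0, 0, a, b, h, by simp, by simp⟩

lemma muN_mono_le {n m : ℕ} (hnm : n ≤ m) {a b : AM r} (h : muN r lam pi n a b) :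
    muN r lam pi m a b := by
  induction hnm with
  | refl => exact h
  | step _ ih => exact muN_mono r lam pi _ ih

lemma muN_symm : ∀ (n : ℕ) {a b : AM r}, muN r lam pi n a b → muN r lam pi n b a := by
  intro n
  induction n with
  | zero => rintro a b ⟨c, h⟩; exact ⟨c, h.symm⟩
  | succ n ih =>
    have h4 : n % 4 = 0 ∨ n % 4 = 1 ∨ n % 4 = 2 ∨ n % 4 = 3 := by omega
    rcases h4 with h0 | h1 | h2 | h3
    · rw [muN_succ_eq_transGen r lam pi n (Or.inl h0)]
      intro a b hab
      induction hab with
      | single h' => exact Relation.TransGen.single (ih h')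
      | tail _ h' ih2 => exact (Relation.TransGen.single (ih h')).trans ih2
    · rw [muN_succ_eq_of_one r lam pi n h1]
      rintro u v ⟨z, c, a, b, hab, hor⟩
      exact ⟨z, c, b, a, ih hab, by tauto⟩
    · rw [muN_succ_eq_transGen r lam pi n (Or.inr h2)]
      intro a b hab
      induction hab with
      | single h' => exact Relation.TransGen.single (ih h')
      | tail _ h' ih2 => exact (Relation.TransGen.single (ih h')).trans ih2
    · rw [muN_succ_eq_of_three r lam pi n h3]
      rintro u v (⟨c, d, a, b, hab, hu, hv⟩ | ⟨c, h'⟩)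
      · exact Or.inl ⟨c, d, b, a, ih hab, hv, hu⟩
      · exact Or.inr ⟨c, ih h'⟩

lemma muN_addL (n : ℕ) {a b : AM r} (h : muN r lam pi n a b) (c d : AM r) :
    muN r lam pi (4 * n + 4) (c + a + d) (c + b + d) := by
  have h' : muN r lam pi (4 * n + 3) a b :=
    muN_mono_le r lam pi (by omega) h
  rw [show 4 * n + 4 = (4 * n + 3) + 1 from rfl,
    muN_succ_eq_of_three r lam pi (4 * n + 3) (by omega)]
  exact Or.inl ⟨c, d, a, b, h', rfl, rfl⟩

lemma muN_cancel (n : ℕ) {z a b : AM r} (h : muN r lam pi n (z + a) (z + b)) :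
    muN r lam pi (4 * n + 4) a b := by
  have h' : muN r lam pi (4 * n + 3) (z + a) (z + b) :=
    muN_mono_le r lam pi (by omega) h
  rw [show 4 * n + 4 = (4 * n + 3) + 1 from rfl,
    muN_succ_eq_of_three r lam pi (4 * n + 3) (by omega)]
  exact Or.inr ⟨z, h'⟩

lemma muN_trans {n m : ℕ} {a b c : AM r} (h1 : muN r lam pi n a b)
    (h2 : muN r lam pi m b c) : muN r lam pi (4 * max n m + 1) a c := by
  have h1' : muN r lam pi (4 * max n m) a b :=
    muN_mono_le r lam pi (by omega) h1
  have h2' : muN r lam pi (4 * max n m) b c :=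
    muN_mono_le r lam pi (by omega) h2
  rw [muN_succ_eq_transGen r lam pi (4 * max n m) (by omega)]
  exact (Relation.TransGen.single h1').trans (Relation.TransGen.single h2')

end MuLemmas

/-- congruence and cancellation. -/
theorem mu_add_congruence {X : Type*} (r : X × X → X × X)
    (hYBE : IsYBE r) (hLND : IsLeftND r)
(lam : SM r →* AddAut (AM r))
    (hlamX : ∀ x y : X, lam (ofSM r x) (ofAM r y) = ofAM r (ybeSigma r x y))
    (pi : SM r ≃ AM r)
    (hpiX : ∀ x : X, pi (ofSM r x) = ofAM r x)
    (hpi : ∀ a b : SM r, pi (a * b) = pi a + lam a (pi b)) :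
    Equivalence (muRel r lam pi) ∧
    (∀ a b c d : AM r, muRel r lam pi a b → muRel r lam pi c d →
      muRel r lam pi (a + c) (b + d)) ∧
    (∀ z a b : AM r, muRel r lam pi (z + a) (z + b) → muRel r lam pi a b) := by
  refine ⟨⟨fun a => ⟨0, 0, rfl⟩, ?_, ?_⟩, ?_, ?_⟩
  · rintro a b ⟨n, h⟩
    exact ⟨n, muN_symm r lam pi n h⟩
  · rintro a b c ⟨n, h1⟩ ⟨m, h2⟩
    exact ⟨_, muN_trans r lam pi h1 h2⟩
  · rintro a b c d ⟨n, h1⟩ ⟨m, h2⟩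
    have hac : muRel r lam pi (a + c) (b + c) := by
      have := muN_addL r lam pi n h1 0 c
      simp only [zero_add] at this
      exact ⟨_, this⟩
    have hbc : muRel r lam pi (b + c) (b + d) := by
      have := muN_addL r lam pi m h2 b 0
      simp only [add_zero] at this
      exact ⟨_, this⟩
    obtain ⟨n1, hh1⟩ := hac
    obtain ⟨n2, hh2⟩ := hbc
    exact ⟨_, muN_trans r lam pi hh1 hh2⟩
  · rintro z a b ⟨n, h⟩
    exact ⟨_, muN_cancel r lam pi n h⟩
end

section
/- Let (X,r) be a left non-degenerate set-theoretic solution of the YBE, M = M(X,r), and ν the least left cancellative congruence on the monoid (M,∘). Then λ'_a = λ'_b for all (a,b) ∈ ν. -/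
open scoped Classical

/-- If `(a, b)` lies in the least left cancellative congruence `ν` on `(M, ∘)`,
then `λ'_a = λ'_b`. -/
theorem lam_eq_of_nu {X : Type*} (r : X × X → X × X)
    (hYBE : IsYBE r) (hLND : IsLeftND r)
(lam : SM r →* Multiplicative (AddAut (AM r)))
    (hlamX : ∀ x y : X, Multiplicative.toAdd (lam (ofSM r x)) (ofAM r y) = ofAM r (ybeSigma r x y))
    (pi : SM r ≃ AM r)
    (hpiX : ∀ x : X, pi (ofSM r x) = ofAM r x)
    (hpi : ∀ a b : SM r, pi (a * b) = pi a + Multiplicative.toAdd (lam a) (pi b))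
(nu : Con (SM r))
    (hnu : IsLeast {c : Con (SM r) | ∀ z a b : SM r, c (z * a) (z * b) → c a b} nu) :
    ∀ a b : SM r, nu a b → lam a = lam b := by
  intro a b hab
  have hc : Con.ker lam ∈ {c : Con (SM r) | ∀ z a b : SM r, c (z * a) (z * b) → c a b} := by
    intro z a b h
    rw [Con.ker_rel] at h ⊢
    rw [map_mul, map_mul] at h
    exact mul_left_cancel h
  have h := hnu.2 hc hab
  rwa [Con.ker_rel] at h
end

section
/- Let (X,r) be a bijective left non-degenerate set-theoretic solution of the YBE, M = M(X,r) with its two operations + and ∘, and ν the least left cancellative congruence on (M,∘). Then for every z ∈ M, ν ⊇ {((λ'_z)^{-1}(a), (λ'_z)^{-1}(b)) : (a,b) ∈ ν}. -/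
open scoped Classical

section NuAux

variable {X : Type*} (r : X × X → X × X)

/-- The derived `ρ_h(j)` map. -/
noncomputable def nuRho (h j : X) : X := (derivedR r (j, h)).2

lemma nu_ofAM_add (j h : X) :
    ofAM r j + ofAM r h = ofAM r h + ofAM r (nuRho r h j) := by
  have hrel : derivedRel r (FreeAddMonoid.of j + FreeAddMonoid.of h)
      (FreeAddMonoid.of h + FreeAddMonoid.of (nuRho r h j)) := by
    refine ⟨j, h, rfl, ?_⟩
    have h1 : (derivedR r (j, h)).1 = h := rfl
    rw [h1]; rfl
  have hcon : (derivedAddCon r) (FreeAddMonoid.of j + FreeAddMonoid.of h)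
      (FreeAddMonoid.of h + FreeAddMonoid.of (nuRho r h j)) :=
    AddConGen.Rel.of _ _ hrel
  have := (AddCon.eq (derivedAddCon r)).mpr hcon
  simpa [ofAM, map_add] using this

lemma nuRho_surj (hLND : IsLeftND r) (hbij : Function.Bijective r) (h k : X) :
    ∃ j, nuRho r h j = k := by
  obtain ⟨v, hv⟩ := (hLND h).2 k
  obtain ⟨⟨j, w⟩, hjw⟩ := hbij.2 (h, v)
  refine ⟨j, ?_⟩
  have hsig : ybeSigma r j w = h := by
    show (r (j, w)).1 = h; rw [hjw]
  have hgam : ybeGamma r w j = v := by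
    show (r (j, w)).2 = v; rw [hjw]
  haveI : Nonempty X := ⟨j⟩
  have hinv : Function.invFun (ybeSigma r j) h = w := by
    rw [← hsig]; exact Function.leftInverse_invFun (hLND j).1 w
  show (derivedR r (j, h)).2 = k
  show ybeSigma r h (ybeGamma r (Function.invFun (ybeSigma r j) h) j) = k
  rw [hinv, hgam, hv]

lemma AM_ind (motive : AM r → Prop) (h0 : motive 0)
    (hs : ∀ (x : X) (u : AM r), motive u → motive (ofAM r x + u)) : ∀ u, motive u := by
  intro u
  obtain ⟨w, rfl⟩ := (derivedAddCon r).mk'_surjective u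
  induction w using FreeAddMonoid.recOn with
  | zero => simpa using h0
  | of_add x xs ih =>
      rw [map_add]
      exact hs x _ ih

lemma nu_ex1 : ∀ (u m : AM r), ∃ v, u + m = m + v := by
  have hA : ∀ (m : AM r) (j : X), ∃ v, ofAM r j + m = m + v := by
    refine AM_ind r _ ?_ ?_
    · intro j; exact ⟨ofAM r j, by rw [add_zero, zero_add]⟩
    · intro h m ih j
      obtain ⟨v', hv'⟩ := ih (nuRho r h j)
      refine ⟨v', ?_⟩
      rw [← add_assoc, nu_ofAM_add r j h, add_assoc, hv', ← add_assoc]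
  refine AM_ind r _ ?_ ?_
  · intro m; exact ⟨0, by rw [zero_add, add_zero]⟩
  · intro j u ih m
    obtain ⟨v₁, hv₁⟩ := ih m
    obtain ⟨v₂, hv₂⟩ := hA m j
    exact ⟨v₂ + v₁, by
      rw [add_assoc, hv₁, ← add_assoc, hv₂, add_assoc]⟩

lemma nu_rsur (hLND : IsLeftND r) (hbij : Function.Bijective r) :
    ∀ (v q : AM r), ∃ p, p + v = v + q := by
  have hB : ∀ (q : AM r) (h : X), ∃ p, p + ofAM r h = ofAM r h + q := by
    refine AM_ind r _ ?_ ?_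
    · intro h; exact ⟨0, by rw [zero_add, add_zero]⟩
    · intro k q ih h
      obtain ⟨j, hj⟩ := nuRho_surj r hLND hbij h k
      obtain ⟨p', hp'⟩ := ih h
      refine ⟨ofAM r j + p', ?_⟩
      rw [add_assoc, hp', ← add_assoc, nu_ofAM_add r j h, hj, add_assoc]
  refine AM_ind r _ ?_ ?_
  · intro q; exact ⟨q, by rw [add_zero, zero_add]⟩
  · intro h v ih q
    obtain ⟨p₁, hp₁⟩ := ih q
    obtain ⟨p, hp⟩ := hB p₁ h
    refine ⟨p, ?_⟩
    rw [← add_assoc, hp, add_assoc, hp₁, ← add_assoc]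

end NuAux

/-- `AddAut` viewed multiplicatively (as `Multiplicative (AddAut A)`). -/
instance nuAddAutGroup (A : Type*) [Add A] : Group (AddAut A) :=
  inferInstanceAs (Group (Multiplicative (AddAut A)))

lemma nu_mul_apply {A : Type*} [Add A] (e₁ e₂ : AddAut A) (m : A) : (e₁ * e₂) m = e₁ (e₂ m) :=
  rfl

section NuMain

variable {X : Type*} {r : X × X → X × X}

/-- Left translation `a ↦ π⁻¹(w + π a)`. -/
noncomputable def nuT (pi : SM r ≃ AM r) (w : AM r) (a : SM r) : SM r := pi.symm (w + pi a)

/-- Right translation `a ↦ π⁻¹(π a + u)`. -/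
noncomputable def nuR (pi : SM r ≃ AM r) (u : AM r) (a : SM r) : SM r := pi.symm (pi a + u)

/-- Inverse twist `a ↦ π⁻¹(λ_e⁻¹ (π a))`. -/
noncomputable def nuF (lam : SM r →* AddAut (AM r)) (pi : SM r ≃ AM r) (e a : SM r) : SM r :=
  pi.symm ((lam e)⁻¹ (pi a))

/-- A chosen element with `a * (nuE a w) = nuT w a`. -/
noncomputable def nuE (lam : SM r →* AddAut (AM r)) (pi : SM r ≃ AM r)
    (a : SM r) (w : AM r) : SM r :=
  pi.symm ((lam a)⁻¹ (Classical.choose (nu_ex1 r w (pi a))))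

variable (lam : SM r →* AddAut (AM r)) (pi : SM r ≃ AM r) (nu : Con (SM r))

@[simp] lemma pi_nuT (w a) : pi (nuT pi w a) = w + pi a := pi.apply_symm_apply _
@[simp] lemma pi_nuR (u a) : pi (nuR pi u a) = pi a + u := pi.apply_symm_apply _
@[simp] lemma pi_nuF (e a) : pi (nuF lam pi e a) = (lam e)⁻¹ (pi a) := pi.apply_symm_apply _

lemma lam_inv_apply (e : SM r) (u : AM r) : (lam e) ((lam e)⁻¹ u) = u :=
  AddEquiv.apply_symm_apply (lam e) u
lemma lam_inv_apply' (e : SM r) (u : AM r) : (lam e)⁻¹ ((lam e) u) = u :=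
  AddEquiv.symm_apply_apply (lam e) u

variable (hpi : ∀ a b : SM r, pi (a * b) = pi a + lam a (pi b))

section WithHpi
include hpi

lemma nuE_spec (a : SM r) (w : AM r) : a * nuE lam pi a w = nuT pi w a := by
  apply pi.injective
  rw [hpi, pi_nuT]
  have hch := Classical.choose_spec (nu_ex1 r w (pi a))
  simp only [nuE, pi.apply_symm_apply, lam_inv_apply]
  rw [← hch]

/-- `z * F z x = T (π z) x`. -/
lemma nuT_pi (z x : SM r) : z * nuF lam pi z x = nuT pi (pi z) x := by
  apply pi.injective
  rw [hpi, pi_nuF, pi_nuT, lam_inv_apply]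

/-- general solution version of `T`-mult decomposition. -/
lemma nuT_mul (w : AM r) (a a' Y : SM r) (hY : a * Y = nuT pi w a) :
    nuT pi w (a * a') = (a * Y) * nuF lam pi Y a' := by
  apply pi.injective
  rw [hpi, hpi, pi_nuT, hpi, pi_nuF]
  have hlam : pi a + lam a (pi Y) = w + pi a := by rw [← hpi]; rw [hY]; exact pi_nuT pi w a
  rw [map_mul]
  rw [nu_mul_apply, lam_inv_apply, ← add_assoc, hlam, add_assoc]

/-- cancel-decomposition: if `w + π z = π z + λ_z (π u)` then `T w (z*x) = z*(u * F u x)`. -/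
lemma nuT_cancel (w : AM r) (z u x : SM r) (hw : w + pi z = pi z + lam z (pi u)) :
    nuT pi w (z * x) = z * (u * nuF lam pi u x) := by
  apply pi.injective
  rw [pi_nuT, hpi, hpi, hpi, pi_nuF, lam_inv_apply, map_add, ← add_assoc, ← add_assoc, ← hw]

/-- `R (λ_z u) (z*x) = z * R u x`. -/
lemma nuR_left (z x : SM r) (u : AM r) :
    nuR pi (lam z u) (z * x) = z * nuR pi u x := by
  apply pi.injective
  rw [pi_nuR, hpi, hpi, pi_nuR, map_add, add_assoc]

/-- `R u (a*a') = a * R (λ_a⁻¹ u) a'`. -/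
lemma nuR_mul (a a' : SM r) (u : AM r) :
    nuR pi u (a * a') = a * nuR pi ((lam a)⁻¹ u) a' := by
  have := nuR_left lam pi hpi a a' ((lam a)⁻¹ u)
  rwa [lam_inv_apply] at this

end WithHpi

/-- `T (π P) b' = R (π b') P`. -/
lemma nuT_nuR (P b' : SM r) : nuT pi (pi P) b' = nuR pi (pi b') P := by
  apply pi.injective; rw [pi_nuT, pi_nuR]

/-- `F (z*c) x = F c (F z x)`. -/
lemma nuF_comp (z c x : SM r) :
    nuF lam pi (z * c) x = nuF lam pi c (nuF lam pi z x) := by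
  apply pi.injective
  rw [pi_nuF, pi_nuF, pi_nuF, map_mul, mul_inv_rev, nu_mul_apply]

lemma nuF_surj (z : SM r) : ∀ s, ∃ s', nuF lam pi z s' = s := by
  intro s
  refine ⟨pi.symm (lam z (pi s)), ?_⟩
  apply pi.injective
  rw [pi_nuF, pi.apply_symm_apply, lam_inv_apply']

section WithHpi2
include hpi

/-- `R (λ_a⁻¹ u) s = s * F (a*s) (π⁻¹ u)`. -/
lemma nuR_inv_eq (a s : SM r) (u : AM r) :
    nuR pi ((lam a)⁻¹ u) s = s * nuF lam pi (a * s) (pi.symm u) := by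
  apply pi.injective
  rw [pi_nuR, hpi, pi_nuF, map_mul, mul_inv_rev, nu_mul_apply, pi.apply_symm_apply,
    lam_inv_apply]

/-- `a * (a' * E a' (π (E a w))) = T w (a*a')`. -/
lemma nuE_mul_assoc (a a' : SM r) (w : AM r) :
    a * (a' * nuE lam pi a' (pi (nuE lam pi a w))) = nuT pi w (a * a') := by
  apply pi.injective
  rw [hpi, nuE_spec lam pi hpi, pi_nuT, pi_nuT, hpi, map_add, ← add_assoc]
  have : pi a + lam a (pi (nuE lam pi a w)) = w + pi a := by
    rw [← hpi, nuE_spec lam pi hpi, pi_nuT]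
  rw [this, add_assoc]

/-- if `w + π z = π z + λ_z v` then `(z*a) * E a (v-elt)` solves for `T w (z*a)`;
here stated with `v = π (arbitrary elt)`: `(z*a) * nuE a v = T w (z*a)` for `v : AM r`. -/
lemma nuE_cancel_sol (z a : SM r) (w v : AM r) (hw : w + pi z = pi z + lam z v) :
    (z * a) * nuE lam pi a v = nuT pi w (z * a) := by
  apply pi.injective
  rw [mul_assoc, hpi, nuE_spec lam pi hpi, pi_nuT, pi_nuT, hpi, map_add, ← add_assoc, ← hw,
    add_assoc]

end WithHpi2

end NuMain

section NuGfp

variable {X : Type*} {r : X × X → X × X}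
variable (lam : SM r →* AddAut (AM r)) (pi : SM r ≃ AM r) (nu : Con (SM r))

/-- The clause operator. -/
def nuPhi (R : SM r → SM r → Prop) (a b : SM r) : Prop :=
  nu a b ∧
  (∀ w, nu (nuT pi w a) (nuT pi w b)) ∧
  (∀ u, R (nuR pi u a) (nuR pi u b)) ∧
  (∀ w, R (nuE lam pi a w) (nuE lam pi b w)) ∧
  (∀ e s, R (nuF lam pi (a * e) s) (nuF lam pi (b * e) s))

/-- The greatest fixed point (union of postfixed points). -/
def nuC (a b : SM r) : Prop :=
  ∃ R : SM r → SM r → Prop, (∀ x y, R x y → nuPhi lam pi nu R x y) ∧ R a b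

lemma nuPhi_mono {R R' : SM r → SM r → Prop} (h : ∀ x y, R x y → R' x y) :
    ∀ a b, nuPhi lam pi nu R a b → nuPhi lam pi nu R' a b :=
  fun _ _ ⟨h0, h1, h2, h3, h4⟩ =>
    ⟨h0, h1, fun u => h _ _ (h2 u), fun w => h _ _ (h3 w), fun e s => h _ _ (h4 e s)⟩

lemma nuC_post {a b} (h : nuC lam pi nu a b) : nuPhi lam pi nu (nuC lam pi nu) a b := by
  obtain ⟨R, hR, hab⟩ := h
  exact nuPhi_mono lam pi nu (fun x y hxy => ⟨R, hR, hxy⟩) a b (hR a b hab)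

lemma nuC_of_post {R} (hR : ∀ x y, R x y → nuPhi lam pi nu R x y) {a b} (h : R a b) :
    nuC lam pi nu a b := ⟨R, hR, h⟩

lemma nuC_nu {a b} (h : nuC lam pi nu a b) : nu a b := (nuC_post lam pi nu h).1

lemma nuC_refl (a) : nuC lam pi nu a a :=
  nuC_of_post lam pi nu (R := Eq)
    (fun x y hxy => by
      subst hxy
      exact ⟨nu.refl x, fun w => nu.refl _, fun _ => rfl, fun _ => rfl, fun _ _ => rfl⟩) rfl

lemma nuC_of_eq {a b} (h : a = b) : nuC lam pi nu a b := h ▸ nuC_refl lam pi nu a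

lemma nuC_symm {a b} (h : nuC lam pi nu a b) : nuC lam pi nu b a := by
  refine nuC_of_post lam pi nu (R := fun x y => nuC lam pi nu y x) ?_ h
  intro x y hxy
  obtain ⟨h0, h1, h2, h3, h4⟩ := nuC_post lam pi nu hxy
  exact ⟨nu.symm h0, fun w => nu.symm (h1 w), fun u => h2 u, fun w => h3 w,
    fun e s => h4 e s⟩

lemma nuC_trans {a b c} (hab : nuC lam pi nu a b) (hbc : nuC lam pi nu b c) :
    nuC lam pi nu a c := by
  refine nuC_of_post lam pi nu
    (R := fun x z => ∃ y, nuC lam pi nu x y ∧ nuC lam pi nu y z) ?_ ⟨b, hab, hbc⟩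
  rintro x z ⟨y, hxy, hyz⟩
  obtain ⟨h0, h1, h2, h3, h4⟩ := nuC_post lam pi nu hxy
  obtain ⟨g0, g1, g2, g3, g4⟩ := nuC_post lam pi nu hyz
  exact ⟨nu.trans h0 g0, fun w => nu.trans (h1 w) (g1 w),
    fun u => ⟨_, h2 u, g2 u⟩, fun w => ⟨_, h3 w, g3 w⟩, fun e s => ⟨_, h4 e s, g4 e s⟩⟩

variable (hpi : ∀ a b : SM r, pi (a * b) = pi a + lam a (pi b))
variable (hcan : ∀ z a b : SM r, nu (z * a) (z * b) → nu a b)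
variable (hLND : IsLeftND r) (hbij : Function.Bijective r)

section Main
include hpi hcan

lemma nuC_dagger {a b} (h : nuC lam pi nu a b) (u : SM r) :
    nu (nuF lam pi u a) (nuF lam pi u b) := by
  have h1 := (nuC_post lam pi nu h).2.1 (pi u)
  rw [← nuT_pi lam pi hpi u a, ← nuT_pi lam pi hpi u b] at h1
  exact hcan u _ _ h1

include hLND hbij

lemma nuC_cancel {z a b : SM r} (h : nuC lam pi nu (z * a) (z * b)) :
    nuC lam pi nu a b := by
  classical
  set S : SM r → SM r → Prop :=
    fun x y => nuC lam pi nu x y ∨ ∃ z', nuC lam pi nu (z' * x) (z' * y) with hSdef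
  have Pdag : ∀ z' x y, nuC lam pi nu (z' * x) (z' * y) →
      ∀ u : SM r, nu (nuF lam pi u x) (nuF lam pi u y) := by
    intro z' x y hxy u
    obtain ⟨w', hw'⟩ := nu_rsur r hLND hbij (pi z') (lam z' (pi u))
    have h1 := (nuC_post lam pi nu hxy).2.1 w'
    rw [nuT_cancel lam pi hpi w' z' u x hw', nuT_cancel lam pi hpi w' z' u y hw',
      ← mul_assoc, ← mul_assoc] at h1
    exact hcan _ _ _ h1
  have hsingle : ∀ x y, S x y → nuPhi lam pi nu (Relation.TransGen S) x y := by
    intro x y hxy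
    rcases hxy with hc | ⟨z', hz'⟩
    · exact nuPhi_mono lam pi nu
        (fun p q hpq => Relation.TransGen.single (show S p q from Or.inl hpq)) _ _
        (nuC_post lam pi nu hc)
    · have cc := nuC_post lam pi nu hz'
      refine ⟨hcan _ _ _ cc.1, ?_, ?_, ?_, ?_⟩
      · intro w
        have hf := Pdag z' x y hz' (pi.symm w)
        have hmul := nu.mul (nu.refl (pi.symm w)) hf
        rwa [nuT_pi lam pi hpi (pi.symm w) x, nuT_pi lam pi hpi (pi.symm w) y,
          pi.apply_symm_apply] at hmul
      · intro u
        have h2 := cc.2.2.1 (lam z' u)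
        rw [nuR_left lam pi hpi z' x u, nuR_left lam pi hpi z' y u] at h2
        exact Relation.TransGen.single (Or.inr ⟨z', h2⟩)
      · intro v
        obtain ⟨w', hw'⟩ := nu_rsur r hLND hbij (pi z') (lam z' v)
        have h3 := cc.2.2.2.1 w'
        have e1 : (z' * x) * nuE lam pi x v = (z' * x) * nuE lam pi (z' * x) w' := by
          rw [nuE_cancel_sol lam pi hpi z' x w' v hw', nuE_spec lam pi hpi]
        have e2 : (z' * y) * nuE lam pi (z' * y) w' = (z' * y) * nuE lam pi y v := by
          rw [nuE_cancel_sol lam pi hpi z' y w' v hw', nuE_spec lam pi hpi]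
        refine Relation.TransGen.trans (Relation.TransGen.single
            (Or.inr ⟨z' * x, nuC_of_eq lam pi nu e1⟩)) ?_
        refine Relation.TransGen.trans (Relation.TransGen.single (Or.inl h3)) ?_
        exact Relation.TransGen.single (Or.inr ⟨z' * y, nuC_of_eq lam pi nu e2⟩)
      · intro e s
        obtain ⟨s', hs'⟩ := nuF_surj lam pi z' s
        have h4 := cc.2.2.2.2 e s'
        rw [mul_assoc, mul_assoc, nuF_comp lam pi z' (x * e) s',
          nuF_comp lam pi z' (y * e) s', hs'] at h4
        exact Relation.TransGen.single (Or.inl h4)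
  have hpost : ∀ x y, Relation.TransGen S x y → nuPhi lam pi nu (Relation.TransGen S) x y := by
    intro x y hxy
    induction hxy with
    | single h1 => exact hsingle _ _ h1
    | tail _ hyz ih =>
        have h2 := hsingle _ _ hyz
        exact ⟨nu.trans ih.1 h2.1, fun w => nu.trans (ih.2.1 w) (h2.2.1 w),
          fun u => (ih.2.2.1 u).trans (h2.2.2.1 u),
          fun w => (ih.2.2.2.1 w).trans (h2.2.2.2.1 w),
          fun e s => (ih.2.2.2.2 e s).trans (h2.2.2.2.2 e s)⟩
  exact nuC_of_post lam pi nu hpost (Relation.TransGen.single (Or.inr ⟨z, h⟩))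

lemma nuC_mul {a b a' b' : SM r} (ha : nuC lam pi nu a b) (ha' : nuC lam pi nu a' b') :
    nuC lam pi nu (a * a') (b * b') := by
  classical
  set S : SM r → SM r → Prop := fun x y => nuC lam pi nu x y ∨
    ∃ p q p' q', nuC lam pi nu p q ∧ nuC lam pi nu p' q' ∧ x = p * p' ∧ y = q * q' with hSdef
  have hprod : ∀ p q p' q', nuC lam pi nu p q → nuC lam pi nu p' q' →
      nuPhi lam pi nu (Relation.TransGen S) (p * p') (q * q') := by
    intro a b a' b' ha ha'
    have ccA := nuC_post lam pi nu ha
    have ccA' := nuC_post lam pi nu ha'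
    refine ⟨nu.mul ccA.1 ccA'.1, ?_, ?_, ?_, ?_⟩
    · -- clause 1
      intro w
      rw [nuT_mul lam pi hpi w a a' (nuE lam pi a w) (nuE_spec lam pi hpi a w),
        nuT_mul lam pi hpi w b b' (nuE lam pi b w) (nuE_spec lam pi hpi b w)]
      have piece1 : nu (a * nuE lam pi a w) (b * nuE lam pi b w) := by
        rw [nuE_spec lam pi hpi, nuE_spec lam pi hpi]; exact ccA.2.1 w
      have hE : nuC lam pi nu (nuE lam pi a w) (nuE lam pi b w) := ccA.2.2.2.1 w
      have step1 : nu (nuF lam pi (nuE lam pi a w) a') (nuF lam pi (nuE lam pi a w) b') :=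
        nuC_dagger lam pi nu hpi hcan ha' (nuE lam pi a w)
      have step2 : nu (nuF lam pi (nuE lam pi a w) b') (nuF lam pi (nuE lam pi b w) b') := by
        have h4 := (nuC_post lam pi nu hE).2.2.2.2 1 b'
        rw [mul_one, mul_one] at h4
        exact nuC_nu lam pi nu h4
      exact nu.mul piece1 (nu.trans step1 step2)
    · -- clause 2
      intro u
      rw [nuR_mul lam pi hpi a a' u, nuR_mul lam pi hpi b b' u]
      have c1 : S (a * nuR pi ((lam a)⁻¹ u) a') (b * nuR pi ((lam a)⁻¹ u) b') :=
        Or.inr ⟨a, b, _, _, ha, ccA'.2.2.1 ((lam a)⁻¹ u), rfl, rfl⟩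
      have key1 : nuR pi ((lam a)⁻¹ u) b' = b' * nuF lam pi (a * b') (pi.symm u) :=
        nuR_inv_eq lam pi hpi a b' u
      have key2 : nuR pi ((lam b)⁻¹ u) b' = b' * nuF lam pi (b * b') (pi.symm u) :=
        nuR_inv_eq lam pi hpi b b' u
      have c2 : S (b * nuR pi ((lam a)⁻¹ u) b') (b * nuR pi ((lam b)⁻¹ u) b') := by
        rw [key1, key2, ← mul_assoc, ← mul_assoc]
        exact Or.inr ⟨b * b', b * b', _, _, nuC_refl lam pi nu _,
          ccA.2.2.2.2 b' (pi.symm u), rfl, rfl⟩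
      exact Relation.TransGen.trans (Relation.TransGen.single c1) (Relation.TransGen.single c2)
    · -- clause 3
      intro w
      have V := pi (nuE lam pi a w)
      have c1 : nuC lam pi nu (nuE lam pi (a * a') w) (nuE lam pi a' (pi (nuE lam pi a w))) := by
        apply nuC_cancel lam pi nu hpi hcan hLND hbij (z := a * a')
        apply nuC_of_eq lam pi nu
        rw [nuE_spec lam pi hpi, mul_assoc, nuE_mul_assoc lam pi hpi]
      have c2 : nuC lam pi nu (nuE lam pi a' (pi (nuE lam pi a w)))
          (nuE lam pi b' (pi (nuE lam pi a w))) := ccA'.2.2.2.1 _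
      have c3 : nuC lam pi nu (nuE lam pi b' (pi (nuE lam pi a w)))
          (nuE lam pi b' (pi (nuE lam pi b w))) := by
        have hE : nuC lam pi nu (nuE lam pi a w) (nuE lam pi b w) := ccA.2.2.2.1 w
        have h2 := (nuC_post lam pi nu hE).2.2.1 (pi b')
        rw [← nuT_nuR pi, ← nuT_nuR pi, ← nuE_spec lam pi hpi b' (pi (nuE lam pi a w)),
          ← nuE_spec lam pi hpi b' (pi (nuE lam pi b w))] at h2
        exact nuC_cancel lam pi nu hpi hcan hLND hbij h2
      have c4 : nuC lam pi nu (nuE lam pi b' (pi (nuE lam pi b w)))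
          (nuE lam pi (b * b') w) := by
        apply nuC_cancel lam pi nu hpi hcan hLND hbij (z := b * b')
        apply nuC_of_eq lam pi nu
        rw [nuE_spec lam pi hpi, mul_assoc, nuE_mul_assoc lam pi hpi]
      exact Relation.TransGen.single (Or.inl
        (nuC_trans lam pi nu (nuC_trans lam pi nu (nuC_trans lam pi nu c1 c2) c3) c4))
    · -- clause 4
      intro e s
      have l1 : nuC lam pi nu (nuF lam pi (a * (a' * e)) s) (nuF lam pi (b * (a' * e)) s) :=
        ccA.2.2.2.2 (a' * e) s
      have l3 : nuC lam pi nu (nuF lam pi (a' * e) (nuF lam pi b s))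
          (nuF lam pi (b' * e) (nuF lam pi b s)) := ccA'.2.2.2.2 e (nuF lam pi b s)
      rw [← nuF_comp lam pi b (a' * e) s, ← nuF_comp lam pi b (b' * e) s] at l3
      have : nuC lam pi nu (nuF lam pi (a * (a' * e)) s) (nuF lam pi (b * (b' * e)) s) :=
        nuC_trans lam pi nu l1 l3
      rw [mul_assoc, mul_assoc]
      exact Relation.TransGen.single (Or.inl this)
  have hsingle : ∀ x y, S x y → nuPhi lam pi nu (Relation.TransGen S) x y := by
    intro x y hxy
    rcases hxy with hc | ⟨p, q, p', q', hpq, hpq', rfl, rfl⟩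
    · exact nuPhi_mono lam pi nu
        (fun p q hpq => Relation.TransGen.single (show S p q from Or.inl hpq)) _ _
        (nuC_post lam pi nu hc)
    · exact hprod p q p' q' hpq hpq'
  have hpost : ∀ x y, Relation.TransGen S x y → nuPhi lam pi nu (Relation.TransGen S) x y := by
    intro x y hxy
    induction hxy with
    | single h1 => exact hsingle _ _ h1
    | tail _ hyz ih =>
        have h2 := hsingle _ _ hyz
        exact ⟨nu.trans ih.1 h2.1, fun w => nu.trans (ih.2.1 w) (h2.2.1 w),
          fun u => (ih.2.2.1 u).trans (h2.2.2.1 u),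
          fun w => (ih.2.2.2.1 w).trans (h2.2.2.2.1 w),
          fun e s => (ih.2.2.2.2 e s).trans (h2.2.2.2.2 e s)⟩
  exact nuC_of_post lam pi nu hpost
    (Relation.TransGen.single (Or.inr ⟨a, b, a', b', ha, ha', rfl, rfl⟩))

end Main

end NuGfp

theorem nu_invFun_stable_aux {X : Type*} (r : X × X → X × X)
    (hYBE : IsYBE r) (hLND : IsLeftND r) (hbij : Function.Bijective r)
(lam : SM r →* AddAut (AM r))
    (hlamX : ∀ x y : X, lam (ofSM r x) (ofAM r y) = ofAM r (ybeSigma r x y))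
    (pi : SM r ≃ AM r)
    (hpiX : ∀ x : X, pi (ofSM r x) = ofAM r x)
    (hpi : ∀ a b : SM r, pi (a * b) = pi a + lam a (pi b))
(nu : Con (SM r))
    (hnu : IsLeast {c : Con (SM r) | ∀ z a b : SM r, c (z * a) (z * b) → c a b} nu) :
    ∀ z a b : SM r, nu a b →
      nu (pi.symm ((lam z)⁻¹ (pi a))) (pi.symm ((lam z)⁻¹ (pi b))) := by
  intro z a b hab
  have hcan : ∀ z a b : SM r, nu (z * a) (z * b) → nu a b := hnu.1
  have hmem : (⟨⟨nuC lam pi nu, ⟨nuC_refl lam pi nu, fun h => nuC_symm lam pi nu h,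
      fun h1 h2 => nuC_trans lam pi nu h1 h2⟩⟩,
      fun h1 h2 => nuC_mul lam pi nu hpi hcan hLND hbij h1 h2⟩ : Con (SM r)) ∈
      {c : Con (SM r) | ∀ z a b : SM r, c (z * a) (z * b) → c a b} := by
    intro z a b h
    exact nuC_cancel lam pi nu hpi hcan hLND hbij h
  have hle := hnu.2 hmem
  have hc : nuC lam pi nu a b := hle hab
  have h1 := (nuC_post lam pi nu hc).2.1 (pi z)
  rw [← nuT_pi lam pi hpi z a, ← nuT_pi lam pi hpi z b] at h1
  exact hnu.1 z _ _ h1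

/-- For a bijective left non-degenerate solution, `ν` is stable under the
inverses `(λ'_z)⁻¹` (transported to `M` via the identification `π`). -/
theorem nu_invFun_stable {X : Type*} (r : X × X → X × X)
    (hYBE : IsYBE r) (hLND : IsLeftND r) (hbij : Function.Bijective r)
(lam : SM r →* Multiplicative (AddAut (AM r)))
    (hlamX : ∀ x y : X, Multiplicative.toAdd (lam (ofSM r x)) (ofAM r y) = ofAM r (ybeSigma r x y))
    (pi : SM r ≃ AM r)
    (hpiX : ∀ x : X, pi (ofSM r x) = ofAM r x)
    (hpi : ∀ a b : SM r, pi (a * b) = pi a + Multiplicative.toAdd (lam a) (pi b))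
(nu : Con (SM r))
    (hnu : IsLeast {c : Con (SM r) | ∀ z a b : SM r, c (z * a) (z * b) → c a b} nu) :
    ∀ z a b : SM r, nu a b →
      nu (pi.symm (Multiplicative.toAdd (lam z)⁻¹ (pi a))) (pi.symm (Multiplicative.toAdd (lam z)⁻¹ (pi b))) := by
  exact nu_invFun_stable_aux r hYBE hLND hbij lam hlamX pi hpiX hpi nu hnu
end

section
/- Let (X,r) be a bijective left non-degenerate set-theoretic solution of the YBE, M = M(X,r) with its two operations + and ∘, and ν the least left cancellative congruence on the monoid (M,∘). Then ν is also a congruence on the monoid (M,+). -/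
open scoped Classical

section AuxYBE

variable {X : Type*}

/-- The generator relation of the derived structure monoid, in the quotient. -/
private lemma relT_aux (r : X × X → X × X) (x y : X) :
    ofAM r x + ofAM r y = ofAM r y + ofAM r ((derivedR r (x, y)).2) := by
  have h : derivedAddCon r (FreeAddMonoid.of x + FreeAddMonoid.of y)
      (FreeAddMonoid.of y + FreeAddMonoid.of ((derivedR r (x, y)).2)) := by
    exact AddConGen.Rel.of _ _ ⟨x, y, rfl, rfl⟩
  have e := (AddCon.eq (c := derivedAddCon r)).2 h
  simpa [ofAM, map_add] using e

/-- Induction principle for `AM r`. -/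
private lemma amInduction (r : X × X → X × X) {p : AM r → Prop} (h0 : p 0)
    (hx : ∀ (x : X) (a : AM r), p a → p (ofAM r x + a)) : ∀ a, p a := by
  intro a
  induction a using AddCon.induction_on with
  | _ w =>
    induction w using FreeAddMonoid.recOn with
    | zero => exact h0
    | of_add x xs ih =>
      have : ((FreeAddMonoid.of x + xs : FreeAddMonoid X) : AM r)
          = ofAM r x + (xs : AM r) := by
        show (derivedAddCon r).mk' _ = _
        rw [map_add]; rfl
      rw [this]
      exact hx x _ ih

private lemma m1x_aux (r : X × X → X × X) (x : X) :
    ∀ a : AM r, ∃ c, a + ofAM r x = ofAM r x + c := by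
  refine amInduction r ⟨0, by rw [zero_add, add_zero]⟩ ?_
  rintro y a ⟨c, hc⟩
  exact ⟨ofAM r ((derivedR r (y, x)).2) + c, by
    rw [add_assoc, hc, ← add_assoc, relT_aux, add_assoc]⟩

private lemma n1_aux (r : X × X → X × X) :
    ∀ b a : AM r, ∃ c, a + b = b + c := by
  refine amInduction r (fun a => ⟨a, by rw [add_zero, zero_add]⟩) ?_
  rintro x b ih a
  obtain ⟨c1, hc1⟩ := m1x_aux r x a
  obtain ⟨c2, hc2⟩ := ih c1
  exact ⟨c2, by rw [← add_assoc, hc1, add_assoc, hc2, ← add_assoc]⟩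

private lemma m2x_aux (r : X × X → X × X)
    (hs : ∀ y : X, Function.Surjective (fun x => (derivedR r (x, y)).2)) (x : X) :
    ∀ a : AM r, ∃ c, ofAM r x + a = c + ofAM r x := by
  refine amInduction r ⟨0, by rw [add_zero, zero_add]⟩ ?_
  rintro y a ⟨c, hc⟩
  obtain ⟨s, hsx⟩ := hs x y
  refine ⟨ofAM r s + c, ?_⟩
  have h1 : ofAM r s + ofAM r x = ofAM r x + ofAM r y := by
    rw [relT_aux r s x]; simp only at hsx; rw [hsx]
  rw [← add_assoc, ← h1, add_assoc, hc, ← add_assoc]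

private lemma n2_aux (r : X × X → X × X)
    (hs : ∀ y : X, Function.Surjective (fun x => (derivedR r (x, y)).2)) :
    ∀ a b : AM r, ∃ c, a + b = c + a := by
  refine amInduction r (fun b => ⟨b, by rw [zero_add, add_zero]⟩) ?_
  rintro x a ih b
  obtain ⟨c1, hc1⟩ := ih b
  obtain ⟨c2, hc2⟩ := m2x_aux r hs x c1
  exact ⟨c2, by rw [add_assoc, hc1, ← add_assoc, hc2, add_assoc]⟩

private lemma tsurj_aux (r : X × X → X × X) (hLND : IsLeftND r)
    (hbij : Function.Bijective r) (y : X) :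
    Function.Surjective (fun x => (derivedR r (x, y)).2) := by
  intro z
  obtain ⟨w, hw⟩ := (hLND y).surjective z
  obtain ⟨⟨x, v⟩, hxv⟩ := hbij.surjective (y, w)
  refine ⟨x, ?_⟩
  haveI : Nonempty X := ⟨x⟩
  have h1 : ybeSigma r x v = y := congrArg Prod.fst hxv
  have h2 : ybeGamma r v x = w := congrArg Prod.snd hxv
  have h3 : Function.invFun (ybeSigma r x) y = v := by
    apply (hLND x).injective
    rw [h1]
    exact Function.invFun_eq ⟨v, h1⟩
  show (derivedR r (x, y)).2 = z
  simp only [derivedR]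
  rw [h3, h2, hw]

/-- "Contexts" built from left/right addition and right multiplication. -/
inductive YCtx {M : Type*} (mul : M → M → M) (add : M → M → M) : (M → M) → Prop
  | id' : YCtx mul add (fun x => x)
  | addl (u : M) {f : M → M} : YCtx mul add f → YCtx mul add (fun x => add u (f x))
  | addr (u : M) {f : M → M} : YCtx mul add f → YCtx mul add (fun x => add (f x) u)
  | mulr (v : M) {f : M → M} : YCtx mul add f → YCtx mul add (fun x => mul (f x) v)

end AuxYBE

/-- For a bijective left non-degenerate solution, the least left cancellative
congruence `ν` on `(M, ∘)` also is a congruence on `(M, +)`, where `+` is the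
addition transported from `A(X,r)` via the identification `π`. -/
theorem nu_add_congruence {X : Type*} (r : X × X → X × X)
    (hYBE : IsYBE r) (hLND : IsLeftND r) (hbij : Function.Bijective r)
(lam : SM r →* Multiplicative (AddAut (AM r)))
    (hlamX : ∀ x y : X, Multiplicative.toAdd (lam (ofSM r x)) (ofAM r y) = ofAM r (ybeSigma r x y))
    (pi : SM r ≃ AM r)
    (hpiX : ∀ x : X, pi (ofSM r x) = ofAM r x)
    (hpi : ∀ a b : SM r, pi (a * b) = pi a + Multiplicative.toAdd (lam a) (pi b))
(nu : Con (SM r))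
    (hnu : IsLeast {c : Con (SM r) | ∀ z a b : SM r, c (z * a) (z * b) → c a b} nu) :
    ∀ a b c d : SM r, nu a b → nu c d →
      nu (pi.symm (pi a + pi c)) (pi.symm (pi b + pi d)) := by
  classical
  set madd : SM r → SM r → SM r := fun a b => pi.symm (pi a + pi b) with hmadd
  set Lm : SM r → SM r → SM r := fun a b => pi.symm (Multiplicative.toAdd (lam a) (pi b)) with hLm
  set Lm' : SM r → SM r → SM r := fun a b => pi.symm ((Multiplicative.toAdd (lam a)).symm (pi b)) with hLm'
  have hpa : ∀ a b, pi (madd a b) = pi a + pi b := fun a b => pi.apply_symm_apply _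
  have hpL : ∀ a b, pi (Lm a b) = Multiplicative.toAdd (lam a) (pi b) := fun a b => pi.apply_symm_apply _
  have hpL' : ∀ a b, pi (Lm' a b) = (Multiplicative.toAdd (lam a)).symm (pi b) := fun a b => pi.apply_symm_apply _
  have hassoc : ∀ a b c, madd (madd a b) c = madd a (madd b c) := by
    intro a b c; apply pi.injective
    rw [hpa, hpa, hpa, hpa, add_assoc]
  have hLL' : ∀ a b, Lm a (Lm' a b) = b := by
    intro a b; apply pi.injective
    rw [hpL, hpL', AddEquiv.apply_symm_apply]
  have hLadd : ∀ a u v, Lm a (madd u v) = madd (Lm a u) (Lm a v) := by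
    intro a u v; apply pi.injective
    rw [hpL, hpa, hpa, hpL, hpL, map_add]
  have hmul : ∀ a b, a * b = madd a (Lm a b) := by
    intro a b; apply pi.injective
    rw [hpi, hpa, hpL]
  -- normality of the addition on `SM r`
  have hN1 : ∀ u z : SM r, ∃ s, madd u z = madd z s := by
    intro u z
    obtain ⟨c, hc⟩ := n1_aux r (pi z) (pi u)
    refine ⟨pi.symm c, ?_⟩
    apply pi.injective
    rw [hpa, hpa, hc, pi.apply_symm_apply]
  have hN2 : ∀ v m : SM r, ∃ s, madd v m = madd s v := by
    intro v m
    obtain ⟨c, hc⟩ := n2_aux r (tsurj_aux r hLND hbij) (pi v) (pi m)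
    refine ⟨pi.symm c, ?_⟩
    apply pi.injective
    rw [hpa, hpa, hc, pi.apply_symm_apply]
  -- contexts
  have Fcomp_r : ∀ {f : SM r → SM r} (z : SM r), YCtx (· * ·) madd f →
      YCtx (· * ·) madd (fun x => f (x * z)) := by
    intro f z hf
    induction hf with
    | id' => exact YCtx.mulr z YCtx.id'
    | @addl u f hf ih => exact YCtx.addl u ih
    | @addr u f hf ih => exact YCtx.addr u ih
    | @mulr v f hf ih => exact YCtx.mulr v ih
  -- pushing left multiplication out of a context
  have push : ∀ {f : SM r → SM r}, YCtx (· * ·) madd f → ∀ z : SM r,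
      ∃ g w, YCtx (· * ·) madd g ∧ ∀ x, g (z * x) = w * f x := by
    intro f hf
    induction hf with
    | id' => exact fun z => ⟨fun x => x, z, YCtx.id', fun x => rfl⟩
    | @addl u f hf ih =>
      intro z
      obtain ⟨g1, w1, hg1, he⟩ := ih z
      obtain ⟨s, hs⟩ := hN2 w1 (Lm w1 u)
      refine ⟨fun x => madd s (g1 x), w1, YCtx.addl s hg1, fun x => ?_⟩
      show madd s (g1 (z * x)) = _
      rw [he x, hmul w1, ← hassoc, ← hs, hassoc, ← hLadd, ← hmul]
    | @addr u f hf ih =>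
      intro z
      obtain ⟨g1, w1, hg1, he⟩ := ih z
      refine ⟨fun x => madd (g1 x) (Lm w1 u), w1, YCtx.addr (Lm w1 u) hg1, fun x => ?_⟩
      show madd (g1 (z * x)) (Lm w1 u) = _
      rw [he x, hmul w1, hassoc, ← hLadd, ← hmul]
    | @mulr v f hf ih =>
      intro z
      obtain ⟨g1, w1, hg1, he⟩ := ih z
      refine ⟨fun x => g1 x * v, w1, YCtx.mulr v hg1, fun x => ?_⟩
      show g1 (z * x) * v = _
      rw [he x, mul_assoc]
  -- pushing left multiplication into a context
  have rpush : ∀ {f : SM r → SM r}, YCtx (· * ·) madd f → ∀ z : SM r,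
      ∃ g w, YCtx (· * ·) madd g ∧ ∀ x, f (z * x) = w * g x := by
    intro f hf
    induction hf with
    | id' => exact fun z => ⟨fun x => x, z, YCtx.id', fun x => rfl⟩
    | @addl u f hf ih =>
      intro z
      obtain ⟨g1, w1, hg1, he⟩ := ih z
      obtain ⟨s, hs⟩ := hN1 u w1
      refine ⟨fun x => madd (Lm' w1 s) (g1 x), w1, YCtx.addl (Lm' w1 s) hg1, fun x => ?_⟩
      show madd u (f (z * x)) = _
      rw [he x, hmul w1, ← hassoc, hs, hassoc, hmul w1, hLadd, hLL']
    | @addr u f hf ih =>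
      intro z
      obtain ⟨g1, w1, hg1, he⟩ := ih z
      refine ⟨fun x => madd (g1 x) (Lm' w1 u), w1, YCtx.addr (Lm' w1 u) hg1, fun x => ?_⟩
      show madd (f (z * x)) u = _
      rw [he x, hmul w1, hassoc, hmul w1, hLadd, hLL']
    | @mulr v f hf ih =>
      intro z
      obtain ⟨g1, w1, hg1, he⟩ := ih z
      refine ⟨fun x => g1 x * v, w1, YCtx.mulr v hg1, fun x => ?_⟩
      show f (z * x) * v = _
      rw [he x, mul_assoc]
  -- the candidate congruence
  set crel : SM r → SM r → Prop :=
    fun a b => ∀ f : SM r → SM r, YCtx (· * ·) madd f → nu (f a) (f b) with hcrel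
  have crefl : ∀ a, crel a a := fun a f hf => nu.refl _
  have csymm : ∀ {a b}, crel a b → crel b a := fun h f hf => nu.symm (h f hf)
  have ctrans : ∀ {a b c}, crel a b → crel b c → crel a c :=
    fun h1 h2 f hf => nu.trans (h1 f hf) (h2 f hf)
  have cmul : ∀ {a b c d}, crel a b → crel c d → crel (a * c) (b * d) := by
    intro a b c d hab hcd
    have h1 : crel (a * c) (a * d) := by
      intro f hf
      obtain ⟨g, w, hg, he⟩ := rpush hf a
      rw [he c, he d]
      exact nu.mul (nu.refl w) (hcd g hg)
    have h2 : crel (a * d) (b * d) := by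
      intro f hf
      exact hab _ (Fcomp_r d hf)
    exact ctrans h1 h2
  set C : Con (SM r) := ⟨⟨crel, ⟨crefl, csymm, ctrans⟩⟩, cmul⟩ with hC
  have hCmem : C ∈ {c : Con (SM r) | ∀ z a b : SM r, c (z * a) (z * b) → c a b} := by
    intro z a b h f hf
    obtain ⟨g, w, hg, he⟩ := push hf z
    have h2 := h g hg
    rw [he a, he b] at h2
    exact hnu.1 w (f a) (f b) h2
  have hle : nu ≤ C := hnu.2 hCmem
  intro a b c d hab hcd
  have h1 : nu (madd a c) (madd a d) :=
    hle hcd (fun x => madd a x) (YCtx.addl a YCtx.id')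
  have h2 : nu (madd a d) (madd b d) :=
    hle hab (fun x => madd x d) (YCtx.addr d YCtx.id')
  exact nu.trans h1 h2
end

section
/- Let (X,r) be a left non-degenerate set-theoretic solution of the YBE, M = M(X,r), A(X,r) its left derived structure monoid, π : M → A(X,r) the bijective 1-cocycle with π(x) = x for x ∈ X, λ' the left action associated to the derived solution, and λ, ρ the maps on M from [CJV, Theorem 2.1] (characterized below). Then λ'_a(π(b)) = π(λ_a(b)) for all a,b ∈ M. -/
open scoped Classical

theorem toAdd_one_apply' {A : Type*} [AddMonoid A] (a : A) :
    Multiplicative.toAdd (1 : Multiplicative (AddAut A)) a = a := rfl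

theorem toAdd_mul_apply' {A : Type*} [AddMonoid A] (f g : Multiplicative (AddAut A)) (a : A) :
    Multiplicative.toAdd (f * g) a = Multiplicative.toAdd f (Multiplicative.toAdd g a) := rfl

/-- The `1`-cocycle `π` intertwines the action `λ` of `(M,∘)` on itself with the
action `λ'` on the derived structure monoid: `λ'_a(π(b)) = π(λ_a(b))`. -/
theorem lam'_pi_eq_pi_lam {X : Type*} (r : X × X → X × X)
    (hYBE : IsYBE r) (hLND : IsLeftND r)
(lam : SM r →* Multiplicative (AddAut (AM r)))
    (hlamX : ∀ x y : X, Multiplicative.toAdd (lam (ofSM r x)) (ofAM r y) = ofAM r (ybeSigma r x y))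
    (pi : SM r ≃ AM r)
    (hpiX : ∀ x : X, pi (ofSM r x) = ofAM r x)
    (hpi : ∀ a b : SM r, pi (a * b) = pi a + Multiplicative.toAdd (lam a) (pi b))
(lmap : SM r → SM r → SM r)
    (hlone : lmap 1 = id)
    (hlmul : ∀ a b : SM r, lmap (a * b) = lmap a ∘ lmap b)
    (rmap : SM r → SM r → SM r)
    (hrone : rmap 1 = id)
    (hrmul : ∀ a b : SM r, rmap (a * b) = rmap b ∘ rmap a)
    (hlX : ∀ x y : X, lmap (ofSM r x) (ofSM r y) = ofSM r (ybeSigma r x y))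
    (hrX : ∀ x y : X, rmap (ofSM r y) (ofSM r x) = ofSM r (ybeGamma r y x))
    (hlrel : ∀ a b c : SM r, lmap b (a * c) = lmap b a * lmap (rmap a b) c)
    (hrrel : ∀ a b c : SM r, rmap b (c * a) = rmap (lmap a b) c * rmap b a) :
    ∀ a b : SM r, Multiplicative.toAdd (lam a) (pi b) = pi (lmap a b) := by
  classical
  -- A length homomorphism on the structure monoid
  have hle : structCon r ≤ Con.ker (FreeMonoid.lift (fun _ : X => Multiplicative.ofAdd (1 : ℕ))) := by
    apply Con.conGen_le.mpr
    rintro a b ⟨x, y, rfl, rfl⟩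
    simp [Con.ker_rel]
  set φ : FreeMonoid X →* Multiplicative ℕ :=
    FreeMonoid.lift (fun _ : X => Multiplicative.ofAdd (1 : ℕ)) with hφ
  set L : SM r →* Multiplicative ℕ := Con.lift _ φ hle with hLdef
  have hLone : ∀ u : SM r, L u = 1 → u = 1 := by
    intro u hu
    obtain ⟨w, rfl⟩ := Con.mk'_surjective u
    rw [hLdef, Con.lift_mk'] at hu
    induction w using FreeMonoid.recOn with
    | one => rfl
    | of_mul x xs _ =>
      exfalso
      rw [map_mul, hφ, FreeMonoid.lift_eval_of] at hu
      have h2 := congrArg Multiplicative.toAdd hu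
      simp at h2
  -- `pi 1 = 0`
  have hpi1 : pi (1 : SM r) = 0 := by
    have h := hpi 1 (pi.symm 0)
    rw [one_mul, map_one lam] at h
    simp only [Equiv.apply_symm_apply, toAdd_one_apply', add_zero] at h
    exact h.symm
  -- `lmap u 1 = 1`
  have hlm1 : ∀ u : SM r, lmap u 1 = 1 := by
    intro u
    have h := hlrel 1 u 1
    rw [one_mul, hrone, id_eq] at h
    apply hLone
    have h2 := congrArg L h
    rw [map_mul] at h2
    exact left_eq_mul.mp h2
  -- The defining relation inside the structure monoid
  have hgen : ∀ x y : X, ofSM r x * ofSM r y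
      = ofSM r (ybeSigma r x y) * ofSM r (ybeGamma r y x) := by
    intro x y
    have h : structCon r (FreeMonoid.of x * FreeMonoid.of y)
        (FreeMonoid.of (ybeSigma r x y) * FreeMonoid.of (ybeGamma r y x)) :=
      ConGen.Rel.of _ _ ⟨x, y, rfl, rfl⟩
    calc ofSM r x * ofSM r y
        = (structCon r).mk' (FreeMonoid.of x * FreeMonoid.of y) := (map_mul _ _ _).symm
      _ = (structCon r).mk' (FreeMonoid.of (ybeSigma r x y) * FreeMonoid.of (ybeGamma r y x)) :=
          (Con.eq _).mpr h
      _ = _ := map_mul _ _ _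
  -- The statement for generators, by induction on words
  have hgenlam : ∀ (w : FreeMonoid X) (x : X),
      Multiplicative.toAdd (lam (ofSM r x)) (pi ((structCon r).mk' w))
        = pi (lmap (ofSM r x) ((structCon r).mk' w)) := by
    intro w
    induction w using FreeMonoid.recOn with
    | one =>
      intro x
      rw [map_one, hpi1, hlm1, hpi1]
      exact map_zero _
    | of_mul y ws IH =>
      intro x
      have hm : (structCon r).mk' (FreeMonoid.of y * ws)
          = ofSM r y * (structCon r).mk' ws := map_mul _ _ _
      rw [hm, hpi, map_add, hpiX, hlamX, hlrel, hlX, hrX, hpi, hpiX, ← IH]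
      congr 1
      rw [← toAdd_mul_apply', ← map_mul lam, hgen x y, map_mul lam, toAdd_mul_apply']
  intro a b
  obtain ⟨w, rfl⟩ := Con.mk'_surjective a
  induction w using FreeMonoid.recOn with
  | one =>
    rw [map_one, map_one lam, hlone, toAdd_one_apply']
    simp
  | of_mul x ws IH =>
    have hm : (structCon r).mk' (FreeMonoid.of x * ws)
        = ofSM r x * (structCon r).mk' ws := map_mul _ _ _
    rw [hm, map_mul lam, toAdd_mul_apply', IH, hlmul, Function.comp_apply]
    obtain ⟨v, hv⟩ := Con.mk'_surjective (lmap ((structCon r).mk' ws) b)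
    rw [← hv]
    exact hgenlam v x
end

section
/- Let (X,r) be a left non-degenerate set-theoretic solution of the YBE and M = M(X,r), identified with A(X,r) via the bijective 1-cocycle π. Then for all x, x₁, …, x_k ∈ X and all a ∈ M: λ'_x(x₁∘⋯∘x_k∘a) = λ'_x(x₁∘⋯∘x_k) ∘ λ'_{γ_{x_k}⋯γ_{x_1}(x)}(a). -/
open scoped Classical

/-- Equation (1) of the paper: for `x, x₁, …, x_k ∈ X` and `a ∈ M`,
`λ'_x(x₁∘⋯∘x_k∘a) = λ'_x(x₁∘⋯∘x_k) ∘ λ'_{γ_{x_k}⋯γ_{x₁}(x)}(a)`,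
where `λ'` acts on `M` through the identification `π`. -/
theorem lam'_word_mul {X : Type*} (r : X × X → X × X)
    (hYBE : IsYBE r) (hLND : IsLeftND r)
(lam : SM r →* Multiplicative (AddAut (AM r)))
    (hlamX : ∀ x y : X, Multiplicative.toAdd (lam (ofSM r x)) (ofAM r y) = ofAM r (ybeSigma r x y))
    (pi : SM r ≃ AM r)
    (hpiX : ∀ x : X, pi (ofSM r x) = ofAM r x)
    (hpi : ∀ a b : SM r, pi (a * b) = pi a + Multiplicative.toAdd (lam a) (pi b)) :
    ∀ (x : X) (L : List X) (a : SM r),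
      pi.symm (Multiplicative.toAdd (lam (ofSM r x)) (pi ((L.map (ofSM r)).prod * a))) =
        pi.symm (Multiplicative.toAdd (lam (ofSM r x)) (pi (L.map (ofSM r)).prod)) *
          pi.symm (Multiplicative.toAdd (lam (ofSM r (L.foldl (fun t xi => ybeGamma r xi t) x))) (pi a)) := by
  -- `pi 1 = 0`
  have hpi1 : pi (1 : SM r) = 0 := by
    have h := hpi 1 (pi.symm 0)
    rw [one_mul, Equiv.apply_symm_apply, map_zero, add_zero] at h
    exact h.symm
  have hsymm0 : pi.symm (0 : AM r) = 1 := by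
    rw [← hpi1, Equiv.symm_apply_apply]
  -- the defining relations hold in `SM r`
  have hrel : ∀ x y : X, ofSM r x * ofSM r y =
      ofSM r (ybeSigma r x y) * ofSM r (ybeGamma r y x) := by
    intro x y
    have h : structCon r (FreeMonoid.of x * FreeMonoid.of y)
        (FreeMonoid.of (ybeSigma r x y) * FreeMonoid.of (ybeGamma r y x)) :=
      ConGen.Rel.of _ _ ⟨x, y, rfl, rfl⟩
    simpa [ofSM, map_mul] using (Con.eq _).mpr h
  -- key identity: `x ∘ (x₁∘⋯∘x_k) = λ'_x(x₁∘⋯∘x_k) ∘ (γ_{x_k}⋯γ_{x₁}(x))`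
  have key : ∀ (L : List X) (x : X),
      ofSM r x * (L.map (ofSM r)).prod =
        pi.symm (Multiplicative.toAdd (lam (ofSM r x)) (pi (L.map (ofSM r)).prod)) *
          ofSM r (L.foldl (fun t xi => ybeGamma r xi t) x) := by
    intro L
    induction L with
    | nil =>
      intro x
      simp [hpi1, hsymm0]
    | cons y L ih =>
      intro x
      have hPy : (List.map (ofSM r) (y :: L)).prod =
          ofSM r y * (L.map (ofSM r)).prod := by simp
      have hfold : (y :: L).foldl (fun t xi => ybeGamma r xi t) x =
          L.foldl (fun t xi => ybeGamma r xi t) (ybeGamma r y x) := rfl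
      set P := (L.map (ofSM r)).prod with hP
      have step : pi (ofSM r (ybeSigma r x y) *
          pi.symm (Multiplicative.toAdd (lam (ofSM r (ybeGamma r y x))) (pi P))) =
          Multiplicative.toAdd (lam (ofSM r x)) (pi (ofSM r y * P)) := by
        calc pi (ofSM r (ybeSigma r x y) *
            pi.symm (Multiplicative.toAdd (lam (ofSM r (ybeGamma r y x))) (pi P)))
            = pi (ofSM r (ybeSigma r x y)) +
              Multiplicative.toAdd (lam (ofSM r (ybeSigma r x y)))
                (pi (pi.symm (Multiplicative.toAdd (lam (ofSM r (ybeGamma r y x))) (pi P)))) := hpi _ _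
          _ = ofAM r (ybeSigma r x y) +
              Multiplicative.toAdd (lam (ofSM r (ybeSigma r x y)))
                (Multiplicative.toAdd (lam (ofSM r (ybeGamma r y x))) (pi P)) := by
                rw [hpiX, Equiv.apply_symm_apply]
          _ = ofAM r (ybeSigma r x y) +
              Multiplicative.toAdd (lam (ofSM r (ybeSigma r x y) * ofSM r (ybeGamma r y x))) (pi P) := by
                rw [map_mul]; rfl
          _ = Multiplicative.toAdd (lam (ofSM r x)) (ofAM r y) +
              Multiplicative.toAdd (lam (ofSM r x * ofSM r y)) (pi P) := by
                rw [hlamX, ← hrel]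
          _ = Multiplicative.toAdd (lam (ofSM r x)) (pi (ofSM r y) + Multiplicative.toAdd (lam (ofSM r y)) (pi P)) := by
                rw [map_mul, map_add, hpiX]; rfl
          _ = Multiplicative.toAdd (lam (ofSM r x)) (pi (ofSM r y * P)) := by rw [← hpi]
      calc ofSM r x * (List.map (ofSM r) (y :: L)).prod
          = (ofSM r x * ofSM r y) * P := by rw [hPy, mul_assoc]
        _ = (ofSM r (ybeSigma r x y) * ofSM r (ybeGamma r y x)) * P := by rw [hrel]
        _ = ofSM r (ybeSigma r x y) * (ofSM r (ybeGamma r y x) * P) := by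
              rw [mul_assoc]
        _ = ofSM r (ybeSigma r x y) *
            (pi.symm (Multiplicative.toAdd (lam (ofSM r (ybeGamma r y x))) (pi P)) *
              ofSM r (L.foldl (fun t xi => ybeGamma r xi t) (ybeGamma r y x))) := by
              rw [ih (ybeGamma r y x)]
        _ = (ofSM r (ybeSigma r x y) *
              pi.symm (Multiplicative.toAdd (lam (ofSM r (ybeGamma r y x))) (pi P))) *
            ofSM r (L.foldl (fun t xi => ybeGamma r xi t) (ybeGamma r y x)) := by
              rw [mul_assoc]
        _ = pi.symm (Multiplicative.toAdd (lam (ofSM r x)) (pi (ofSM r y * P))) *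
            ofSM r (L.foldl (fun t xi => ybeGamma r xi t) (ybeGamma r y x)) := by
              rw [← step, Equiv.symm_apply_apply]
        _ = pi.symm (Multiplicative.toAdd (lam (ofSM r x)) (pi (List.map (ofSM r) (y :: L)).prod)) *
            ofSM r ((y :: L).foldl (fun t xi => ybeGamma r xi t) x) := by
              rw [hPy, hfold]
  -- main proof
  intro x L a
  set P := (L.map (ofSM r)).prod with hP
  set g := L.foldl (fun t xi => ybeGamma r xi t) x with hg
  set u := pi.symm (Multiplicative.toAdd (lam (ofSM r x)) (pi P)) with hu
  have hxP : ofSM r x * P = u * ofSM r g := key L x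
  apply pi.injective
  have lhs : Multiplicative.toAdd (lam (ofSM r x)) (pi (P * a)) =
      Multiplicative.toAdd (lam (ofSM r x)) (pi P) + Multiplicative.toAdd (lam u) (Multiplicative.toAdd (lam (ofSM r g)) (pi a)) := by
    rw [hpi, map_add]
    congr 1
    have : Multiplicative.toAdd (lam (ofSM r x)) (Multiplicative.toAdd (lam P) (pi a)) = Multiplicative.toAdd (lam (ofSM r x * P)) (pi a) := by
      rw [map_mul]; rfl
    rw [this, hxP, map_mul]; rfl
  have rhs : pi (u * pi.symm (Multiplicative.toAdd (lam (ofSM r g)) (pi a))) =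
      Multiplicative.toAdd (lam (ofSM r x)) (pi P) + Multiplicative.toAdd (lam u) (Multiplicative.toAdd (lam (ofSM r g)) (pi a)) := by
    rw [hpi, Equiv.apply_symm_apply, hu, Equiv.apply_symm_apply]
  rw [Equiv.apply_symm_apply, lhs, ← rhs]
end

section
/- Let (X,r) be a bijective left and right non-degenerate set-theoretic solution of the YBE and M = M(X,r) with its two operations + and ∘. Let η be the least left cancellative congruence on (M,+) and ν the least left cancellative congruence on (M,∘). Then η = ν. -/
open scoped Classical

/-! ### Auxiliary results on the solution `(X, r)` itself -/

section AuxPointwise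
variable {X : Type*} (r : X × X → X × X)

lemma ybe_E1 (hYBE : IsYBE r) (x y z : X) :
    ybeSigma r (ybeSigma r x y) (ybeSigma r (ybeGamma r y x) z)
      = ybeSigma r x (ybeSigma r y z) := by
  have h := congrFun hYBE (x, y, z)
  simpa [yb12, yb23, Function.comp, ybeSigma, ybeGamma, Prod.ext_iff] using
    congrArg (fun p => p.1) h

/-- Surjectivity of the diagonal map: for every `x` there is `y` with `σ_y(x) = y`. -/
lemma ybe_qsurj (hYBE : IsYBE r) (hLND : IsLeftND r) (hRND : IsRightND r) (x : X) :
    ∃ y, ybeSigma r y x = y := by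
  haveI : Nonempty X := ⟨x⟩
  have hgw : ybeGamma r x (Function.invFun (ybeGamma r x) x) = x :=
    Function.invFun_eq ((hRND x).2 x)
  refine ⟨ybeSigma r (Function.invFun (ybeGamma r x) x) x, ?_⟩
  have h1 := ybe_E1 r hYBE (Function.invFun (ybeGamma r x) x) x
    (Function.invFun (ybeSigma r x) x)
  rw [hgw, Function.invFun_eq ((hLND x).2 x)] at h1
  exact h1

/-- The map `d_y` of the left derived solution. -/
noncomputable def dmap (y x : X) : X :=
  haveI : Nonempty X := ⟨x⟩
  ybeSigma r y (ybeGamma r (Function.invFun (ybeSigma r x) y) x)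

lemma dmap_bij (hLND : IsLeftND r) (hbij : Function.Bijective r) (y : X) :
    Function.Bijective (fun x => dmap r y x) := by
  have key : ∀ x : X, haveI : Nonempty X := ⟨x⟩;
      r (x, Function.invFun (ybeSigma r x) y)
        = (y, ybeGamma r (Function.invFun (ybeSigma r x) y) x) := by
    intro x
    haveI : Nonempty X := ⟨x⟩
    have h1 : ybeSigma r x (Function.invFun (ybeSigma r x) y) = y :=
      Function.invFun_eq ((hLND x).2 y)
    exact Prod.ext h1 rfl
  have gbij : Function.Bijective
      (fun x : X => haveI : Nonempty X := ⟨x⟩;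
        ybeGamma r (Function.invFun (ybeSigma r x) y) x) := by
    constructor
    · intro x1 x2 h
      haveI : Nonempty X := ⟨x1⟩
      have : r (x1, Function.invFun (ybeSigma r x1) y)
          = r (x2, Function.invFun (ybeSigma r x2) y) := by
        rw [key x1, key x2]
        exact Prod.ext rfl h
      have := hbij.1 this
      exact congrArg Prod.fst this
    · intro c
      obtain ⟨⟨x, w⟩, hp⟩ := hbij.2 (y, c)
      haveI : Nonempty X := ⟨x⟩
      refine ⟨x, ?_⟩
      have hxw : ybeSigma r x w = y := congrArg Prod.fst hp
      have hw : w = Function.invFun (ybeSigma r x) y := by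
        apply (hLND x).1
        rw [hxw, Function.invFun_eq ((hLND x).2 y)]
      show ybeGamma r (Function.invFun (ybeSigma r x) y) x = c
      rw [← hw]
      exact congrArg Prod.snd hp
  have : (fun x => dmap r y x) = (ybeSigma r y) ∘
      (fun x : X => haveI : Nonempty X := ⟨x⟩;
        ybeGamma r (Function.invFun (ybeSigma r x) y) x) := rfl
  rw [this]
  exact (hLND y).comp gbij

lemma dmap_emap (hLND : IsLeftND r) (hbij : Function.Bijective r) (y c : X) :
    dmap r y (haveI : Nonempty X := ⟨c⟩;
      Function.invFun (fun x => dmap r y x) c) = c := by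
  haveI : Nonempty X := ⟨c⟩
  exact Function.invFun_eq ((dmap_bij r hLND hbij y).2 c)

end AuxPointwise

/-! ### Auxiliary results on the additive structure monoid -/

section AuxAM
variable {X : Type*} (r : X × X → X × X)

/-- list-sum of generators in `AM r`. -/
noncomputable def sumOf (l : List X) : AM r := (l.map (ofAM r)).sum

lemma sumOf_nil : sumOf r ([] : List X) = 0 := rfl

lemma sumOf_cons (x : X) (l : List X) :
    sumOf r (x :: l) = ofAM r x + sumOf r l := by
  simp [sumOf]

lemma sumOf_concat (l : List X) (x : X) :
    sumOf r (l.concat x) = sumOf r l + ofAM r x := by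
  simp [sumOf]

lemma relAM (x y : X) :
    ofAM r x + ofAM r y = ofAM r y + ofAM r (dmap r y x) := by
  show (derivedAddCon r).mk' _ + (derivedAddCon r).mk' _
      = (derivedAddCon r).mk' _ + (derivedAddCon r).mk' _
  rw [← map_add, ← map_add]
  exact (AddCon.eq _).2 (AddConGen.Rel.of _ _ ⟨x, y, rfl, rfl⟩)

lemma surjAM (u : AM r) : ∃ l : List X, u = sumOf r l := by
  refine AddCon.induction_on u ?_
  intro w
  refine FreeAddMonoid.recOn w ⟨[], ?_⟩ ?_
  · show ((0 : FreeAddMonoid X) : AM r) = 0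
    exact map_zero (derivedAddCon r).mk'
  · rintro x xs ⟨l, hl⟩
    refine ⟨x :: l, ?_⟩
    show ((FreeAddMonoid.of x + xs : FreeAddMonoid X) : AM r) = _
    rw [sumOf_cons, ← hl]
    exact map_add (derivedAddCon r).mk' _ _

/-- the length homomorphism on `AM r`. -/
noncomputable def lenHom : AM r →+ ℕ :=
  (derivedAddCon r).lift
    { toFun := fun w => (FreeAddMonoid.toList w).length
      map_zero' := by simp
      map_add' := fun a b => by simp [FreeAddMonoid.toList_add] }
    (AddCon.addConGen_le.2 (by
      rintro a b ⟨x, y, ha, hb⟩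
      rw [AddCon.ker_rel]
      subst ha hb
      change List.length (FreeAddMonoid.toList _) = List.length (FreeAddMonoid.toList _)
      simp [FreeAddMonoid.toList_add]))

lemma lenHom_ofAM (x : X) : lenHom r (ofAM r x) = 1 := by
  show lenHom r ((derivedAddCon r).mk' (FreeAddMonoid.of x)) = 1
  rfl

lemma lenHom_sumOf (l : List X) : lenHom r (sumOf r l) = l.length := by
  induction l with
  | nil => simp [sumOf_nil]
  | cons x l ih =>
      rw [sumOf_cons, map_add, lenHom_ofAM, ih, List.length_cons]; omega

lemma eq_zero_of_lenHom (u : AM r) (h : lenHom r u = 0) : u = 0 := by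
  obtain ⟨l, rfl⟩ := surjAM r u
  rw [lenHom_sumOf] at h
  rw [List.length_eq_zero_iff] at h
  subst h
  rfl

lemma P2gen (hLND : IsLeftND r) (hbij : Function.Bijective r) (x : X) (u : AM r) :
    ∃ t : AM r, t + ofAM r x = ofAM r x + u := by
  obtain ⟨l, rfl⟩ := surjAM r u
  induction l with
  | nil => exact ⟨0, by rw [sumOf_nil, zero_add, add_zero]⟩
  | cons c l ih =>
      obtain ⟨t', ht'⟩ := ih
      haveI : Nonempty X := ⟨c⟩
      set e := Function.invFun (fun z => dmap r x z) c with he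
      refine ⟨ofAM r e + t', ?_⟩
      have hd : dmap r x e = c := dmap_emap r hLND hbij x c
      rw [add_assoc, ht', ← add_assoc, relAM r e x, hd, sumOf_cons, ← add_assoc]

lemma P2 (hLND : IsLeftND r) (hbij : Function.Bijective r) (w u : AM r) :
    ∃ t : AM r, t + w = w + u := by
  obtain ⟨l, rfl⟩ := surjAM r w
  induction l generalizing u with
  | nil => exact ⟨u, by rw [sumOf_nil, zero_add, add_zero]⟩
  | cons x l ih =>
      obtain ⟨t', ht'⟩ := ih u
      obtain ⟨t, ht⟩ := P2gen r hLND hbij x t'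
      refine ⟨t, ?_⟩
      rw [sumOf_cons, ← add_assoc, ht, add_assoc, ht', ← add_assoc]

/-! ### The one-step left-cancellation relation `H` -/

/-- `H u v` iff `z + u = z + v` for some `z`; this will be shown to be the least
left-cancellative congruence on `(AM r, +)`. -/
def HRel (u v : AM r) : Prop := ∃ z : AM r, z + u = z + v

lemma HRel.refl' (u : AM r) : HRel r u u := ⟨0, rfl⟩

lemma HRel.symm' {u v : AM r} (h : HRel r u v) : HRel r v u := by
  obtain ⟨z, hz⟩ := h; exact ⟨z, hz.symm⟩

lemma HRel.trans' (hLND : IsLeftND r) (hbij : Function.Bijective r)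
    {u v w : AM r} (h1 : HRel r u v) (h2 : HRel r v w) : HRel r u w := by
  obtain ⟨z1, hz1⟩ := h1
  obtain ⟨z2, hz2⟩ := h2
  refine ⟨z1 + z2, ?_⟩
  obtain ⟨s, hs⟩ := P2 r hLND hbij z1 z2
  calc z1 + z2 + u = s + (z1 + u) := by rw [← hs, add_assoc]
    _ = s + (z1 + v) := by rw [hz1]
    _ = z1 + (z2 + v) := by rw [← add_assoc, hs, add_assoc]
    _ = z1 + (z2 + w) := by rw [hz2]
    _ = z1 + z2 + w := by rw [add_assoc]

lemma HRel.addRight {u v : AM r} (s : AM r) (h : HRel r u v) :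
    HRel r (u + s) (v + s) := by
  obtain ⟨z, hz⟩ := h
  exact ⟨z, by rw [← add_assoc, hz, add_assoc]⟩

lemma HRel.addLeft (hLND : IsLeftND r) (hbij : Function.Bijective r)
    {u v : AM r} (w : AM r) (h : HRel r u v) : HRel r (w + u) (w + v) := by
  obtain ⟨z, hz⟩ := h
  obtain ⟨t, ht⟩ := P2 r hLND hbij w z
  refine ⟨t, ?_⟩
  calc t + (w + u) = w + (z + u) := by rw [← add_assoc, ht, add_assoc]
    _ = w + (z + v) := by rw [hz]
    _ = t + (w + v) := by rw [← add_assoc, ← ht, add_assoc]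

lemma HRel.auto (g : AddAut (AM r)) {u v : AM r} (h : HRel r u v) :
    HRel r (g u) (g v) := by
  obtain ⟨z, hz⟩ := h
  exact ⟨g z, by rw [← map_add, ← map_add, hz]⟩

lemma HRel.cancel {w u v : AM r} (h : HRel r (w + u) (w + v)) : HRel r u v := by
  obtain ⟨z, hz⟩ := h
  exact ⟨z + w, by rw [add_assoc, add_assoc]; exact hz⟩

/-- `H` as an additive congruence. -/
noncomputable def Hcon (hLND : IsLeftND r) (hbij : Function.Bijective r) :
    AddCon (AM r) :=
  { r := HRel r
    iseqv := ⟨HRel.refl' r, HRel.symm' r, HRel.trans' r hLND hbij⟩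
    add' := fun {w x y z} h1 h2 => by
      have s1 : HRel r (w + y) (x + y) := HRel.addRight r y h1
      have s2 : HRel r (x + y) (x + z) := HRel.addLeft r hLND hbij x h2
      exact HRel.trans' r hLND hbij s1 s2 }

end AuxAM

/-! ### eta is the one-step relation -/

section AuxEta
variable {X : Type*} (r : X × X → X × X)

lemma etaH (hLND : IsLeftND r) (hbij : Function.Bijective r)
    (eta : AddCon (AM r))
    (heta : IsLeast {c : AddCon (AM r) | ∀ z a b : AM r, c (z + a) (z + b) → c a b} eta)
    (u v : AM r) : eta u v ↔ HRel r u v := by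
  constructor
  · intro h
    have hmem : Hcon r hLND hbij ∈
        {c : AddCon (AM r) | ∀ z a b : AM r, c (z + a) (z + b) → c a b} :=
      fun z a b hc => HRel.cancel r hc
    exact AddCon.le_def.1 (heta.2 hmem) h
  · rintro ⟨z, hz⟩
    have : eta (z + u) (z + v) := by rw [hz]; exact eta.refl _
    exact heta.1 z u v this

end AuxEta

/-! ### lam and pi lemmas -/

section AuxLam
variable {X : Type*} (r : X × X → X × X)

instance instCoeFunMultAddAut {A : Type*} [Add A] :
    CoeFun (Multiplicative (AddAut A)) (fun _ => A → A) :=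
  ⟨fun g => ⇑(Multiplicative.toAdd g)⟩

lemma pi_one (lam : SM r →* Multiplicative (AddAut (AM r))) (pi : SM r ≃ AM r)
    (hpi : ∀ a b : SM r, pi (a * b) = pi a + lam a (pi b)) :
    pi (1 : SM r) = 0 := by
  have h : pi 1 = pi 1 + pi 1 := by
    have h1 := hpi 1 1
    rw [one_mul, show (lam 1 : Multiplicative (AddAut (AM r))) = 1 from map_one lam] at h1
    simpa using h1
  apply eq_zero_of_lenHom r
  have := congrArg (lenHom r) h
  rw [map_add] at this
  omega

lemma lam_sumOf (lam : SM r →* Multiplicative (AddAut (AM r)))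
    (hlamX : ∀ x y : X, lam (ofSM r x) (ofAM r y) = ofAM r (ybeSigma r x y))
    (y : X) (l : List X) :
    lam (ofSM r y) (sumOf r l) = sumOf r (l.map (ybeSigma r y)) := by
  induction l with
  | nil => simp [sumOf_nil]
  | cons c l ih =>
      rw [sumOf_cons, map_add, hlamX, ih, List.map_cons, sumOf_cons]

/-- Key "diamond" lemma: every `u : AM r` occurs as a right tail of some `pi ζ`
up to the twist `lam ζ`. -/
lemma diamond (lam : SM r →* Multiplicative (AddAut (AM r)))
    (hlamX : ∀ x y : X, lam (ofSM r x) (ofAM r y) = ofAM r (ybeSigma r x y))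
    (pi : SM r ≃ AM r)
    (hpiX : ∀ x : X, pi (ofSM r x) = ofAM r x)
    (hpi : ∀ a b : SM r, pi (a * b) = pi a + lam a (pi b))
    (hYBE : IsYBE r) (hLND : IsLeftND r) (hRND : IsRightND r)
    (u : AM r) : ∃ (ζ : SM r) (t : AM r), pi ζ = t + lam ζ u := by
  obtain ⟨l, rfl⟩ := surjAM r u
  obtain ⟨n, hn⟩ : ∃ n, l.length = n := ⟨_, rfl⟩
  induction n generalizing l with
  | zero =>
      rw [List.length_eq_zero_iff] at hn
      subst hn
      refine ⟨1, 0, ?_⟩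
      rw [pi_one r lam pi hpi, map_one, sumOf_nil]
      simp
  | succ n ih =>
      rcases List.eq_nil_or_concat l with rfl | ⟨L, x, rfl⟩
      · simp at hn
      · obtain ⟨y, hy⟩ := ybe_qsurj r hYBE hLND hRND x
        have hL : (L.map (ybeSigma r y)).length = n := by
          rw [List.length_map]
          have := hn
          rw [List.length_concat] at this
          omega
        obtain ⟨ζ', t', h'⟩ := ih (L.map (ybeSigma r y)) hL
        refine ⟨ζ' * ofSM r y, t', ?_⟩
        have hlam : lam (ζ' * ofSM r y) (sumOf r (L.concat x))
            = lam ζ' (sumOf r (L.map (ybeSigma r y)) + ofAM r y) := by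
          rw [map_mul, toAdd_mul, AddAut.add_apply, sumOf_concat, map_add, hlamX,
            lam_sumOf r lam hlamX, hy]
        rw [hlam, hpi, hpiX, map_add, h', add_assoc]

/-- From `eta (pi a) (pi b)` we get a common left multiplier in `(SM r, *)`. -/
lemma eta_zeta (lam : SM r →* Multiplicative (AddAut (AM r)))
    (hlamX : ∀ x y : X, lam (ofSM r x) (ofAM r y) = ofAM r (ybeSigma r x y))
    (pi : SM r ≃ AM r)
    (hpiX : ∀ x : X, pi (ofSM r x) = ofAM r x)
    (hpi : ∀ a b : SM r, pi (a * b) = pi a + lam a (pi b))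
    (hYBE : IsYBE r) (hLND : IsLeftND r) (hRND : IsRightND r)
    (hbij : Function.Bijective r)
    (eta : AddCon (AM r))
    (heta : IsLeast {c : AddCon (AM r) | ∀ z a b : AM r, c (z + a) (z + b) → c a b} eta)
    {a b : SM r} (h : eta (pi a) (pi b)) : ∃ ζ : SM r, ζ * a = ζ * b := by
  obtain ⟨z, hz⟩ := (etaH r hLND hbij eta heta _ _).1 h
  obtain ⟨ζ, t, hζ⟩ := diamond r lam hlamX pi hpiX hpi hYBE hLND hRND z
  refine ⟨ζ, pi.injective ?_⟩
  rw [hpi, hpi, hζ, add_assoc, add_assoc, ← map_add, ← map_add, hz]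

lemma lam_eq (lam : SM r →* Multiplicative (AddAut (AM r)))
    (hlamX : ∀ x y : X, lam (ofSM r x) (ofAM r y) = ofAM r (ybeSigma r x y))
    (pi : SM r ≃ AM r)
    (hpiX : ∀ x : X, pi (ofSM r x) = ofAM r x)
    (hpi : ∀ a b : SM r, pi (a * b) = pi a + lam a (pi b))
    (hYBE : IsYBE r) (hLND : IsLeftND r) (hRND : IsRightND r)
    (hbij : Function.Bijective r)
    (eta : AddCon (AM r))
    (heta : IsLeast {c : AddCon (AM r) | ∀ z a b : AM r, c (z + a) (z + b) → c a b} eta)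
    {a b : SM r} (h : eta (pi a) (pi b)) : lam a = lam b := by
  obtain ⟨ζ, hζ⟩ := eta_zeta r lam hlamX pi hpiX hpi hYBE hLND hRND hbij eta heta h
  have := congrArg lam hζ
  rw [map_mul, map_mul] at this
  exact mul_left_cancel this

end AuxLam

/-- For a bijective left and right non-degenerate solution, the least left
cancellative congruence `ν` on `(M,∘)` coincides (through the identification
`π`) with the least left cancellative congruence `η` on `(M,+)`. -/
theorem eta_eq_nu {X : Type*} (r : X × X → X × X)
    (hYBE : IsYBE r) (hLND : IsLeftND r) (hRND : IsRightND r)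
    (hbij : Function.Bijective r)
(lam : SM r →* Multiplicative (AddAut (AM r)))
    (hlamX : ∀ x y : X, (Multiplicative.toAdd (lam (ofSM r x))) (ofAM r y) = ofAM r (ybeSigma r x y))
    (pi : SM r ≃ AM r)
    (hpiX : ∀ x : X, pi (ofSM r x) = ofAM r x)
    (hpi : ∀ a b : SM r, pi (a * b) = pi a + (Multiplicative.toAdd (lam a)) (pi b))
(eta : AddCon (AM r))
    (heta : IsLeast {c : AddCon (AM r) | ∀ z a b : AM r, c (z + a) (z + b) → c a b} eta)
(nu : Con (SM r))
    (hnu : IsLeast {c : Con (SM r) | ∀ z a b : SM r, c (z * a) (z * b) → c a b} nu) :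
    ∀ a b : SM r, nu a b ↔ eta (pi a) (pi b) := by
  have hH := etaH r hLND hbij eta heta
  -- the pullback of eta along pi, as a multiplicative congruence
  have cmul : ∀ {a b a' b' : SM r}, eta (pi a) (pi b) → eta (pi a') (pi b') →
      eta (pi (a * a')) (pi (b * b')) := by
    intro a b a' b' h1 h2
    have hl : lam a = lam b :=
      lam_eq r lam hlamX pi hpiX hpi hYBE hLND hRND hbij eta heta h1
    rw [(hH _ _)] at h1 h2 ⊢
    rw [hpi, hpi, ← hl]
    have s1 : HRel r (pi a + lam a (pi a')) (pi b + lam a (pi a')) :=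
      HRel.addRight r _ h1
    have s2 : HRel r (lam a (pi a')) (lam a (pi b')) := HRel.auto r (lam a) h2
    have s3 : HRel r (pi b + lam a (pi a')) (pi b + lam a (pi b')) :=
      HRel.addLeft r hLND hbij _ s2
    exact HRel.trans' r hLND hbij s1 s3
  let cc : Con (SM r) :=
    { r := fun a b => eta (pi a) (pi b)
      iseqv := ⟨fun a => eta.refl _, fun h => eta.symm h, fun h1 h2 => eta.trans h1 h2⟩
      mul' := fun h1 h2 => cmul h1 h2 }
  have hccmem : cc ∈ {c : Con (SM r) | ∀ z a b : SM r, c (z * a) (z * b) → c a b} := by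
    intro z a b h
    show eta (pi a) (pi b)
    have h' : eta (pi z + lam z (pi a)) (pi z + lam z (pi b)) := by
      have : eta (pi (z * a)) (pi (z * b)) := h
      rwa [hpi, hpi] at this
    have h'' : eta (lam z (pi a)) (lam z (pi b)) := heta.1 _ _ _ h'
    rw [hH] at h'' ⊢
    have := HRel.auto r (-Multiplicative.toAdd (lam z)) h''
    simpa [AddAut.neg_def] using this
  intro a b
  constructor
  · intro h
    exact Con.le_def.1 (hnu.2 hccmem) h
  · intro h
    obtain ⟨ζ, hζ⟩ :=
      eta_zeta r lam hlamX pi hpiX hpi hYBE hLND hRND hbij eta heta h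
    have hnuz : nu (ζ * a) (ζ * b) := by rw [hζ]; exact nu.refl _
    exact hnu.1 ζ a b hnuz
end
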